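/- (Linear convergence to a neighborhood under PL.) In the setting of the nonconvex stationarity bound — f : ℝ^d → ℝ differentiable with L-Lipschitz gradient and bounded below by f⋆; constants 0 < μ_H ≤ M_H, 0 ≤ ρ < 1, σ ≥ 0; step size 0 < η ≤ μ_H(1−ρ)/(L(M_H+ρμ_H)²); θ_{t+1} = θ_t − η û_t with θ_t F_t-measurable, û_t F_{t+1}-measurable square-integrable, and almost surely ‖E[û_t|F_t] − H_t∇f(θ_t)‖ ≤ ρμ_H‖∇f(θ_t)‖ for some F_t-measurable symmetric H_t with μ_H I ⪯ H_t ⪯ M_H I, and E[‖û_t − E[û_t|F_t]‖² | F_t] ≤ σ² — assume additionally that f satisfies the Polyak–Łojasiewicz condition with constant μ_PL > 0: (1/2)‖∇f(θ)‖² ≥ μ_PL (f(θ) − f⋆) for all θ. Define c = η μ_H (1−ρ) − (L η² / 2)(M_H + ρ μ_H)², and assume 0 < 2 μ_PL c < 1. Then for every T ≥ 0, E[f(θ_T) − f⋆] ≤ (1 − 2 μ_PL c)^T (f(θ_0) − f⋆) + L η² σ² / (4 μ_PL c). -/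

import Mathlib

open MeasureTheory ProbabilityTheory
open scoped RealInnerProductSpace

/-!
Integrating the descent inequality `f (θ - η u) ≤ f θ - η ⟪∇f θ, u⟫ + L η² / 2 ‖u‖²` of an
`L`-smooth `f` and conditioning on `F t`, under which `∇f (θ t)` is measurable, replaces `u` by its
conditional mean `ū` in the inner product and splits `E ‖u‖² = E ‖ū‖² + E ‖u - ū‖²`. The bias
condition gives `⟪∇f, ū⟫ ≥ (1 - ρ) μ_H ‖∇f‖²` and `‖ū‖ ≤ (M_H + ρ μ_H) ‖∇f‖`, so the drift is at
most `-c E ‖∇f‖² ≤ -2 μ_PL c E [f - f⋆]` by PL, while the noise adds at most `L η² σ² / 2`. The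
contraction `a (t + 1) ≤ (1 - 2 μ_PL c) a t + L η² σ² / 2` unrolls to the claim.
-/

section

variable {E : Type*} [NormedAddCommGroup E] [InnerProductSpace ℝ E]

theorem MeasureTheory.MemLp.integrable_inner {Ω : Type*} {m0 : MeasurableSpace Ω}
    {μ : Measure Ω} {f g : Ω → E} (hf : MemLp f 2 μ) (hg : MemLp g 2 μ) :
    Integrable (fun ω => ⟪f ω, g ω⟫) μ := by
  refine (L2.integrable_inner (𝕜 := ℝ) (hf.toLp f) (hg.toLp g)).congr ?_
  filter_upwards [hf.coeFn_toLp, hg.coeFn_toLp] with ω hfω hgω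
  rw [hfω, hgω]

theorem MeasureTheory.MemLp.integrable_norm_sq {Ω : Type*} {m0 : MeasurableSpace Ω}
    {μ : Measure Ω} {f : Ω → E} (hf : MemLp f 2 μ) :
    Integrable (fun ω => ‖f ω‖ ^ 2) μ := by
  simpa only [real_inner_self_eq_norm_sq] using hf.integrable_inner hf

theorem LinearMap.IsSymmetric.norm_apply_le_of_inner_le [CompleteSpace E] {A : E →ₗ[ℝ] E}
    (hA : A.IsSymmetric) {M : ℝ} (h0 : ∀ x, 0 ≤ ⟪x, A x⟫) (hM : ∀ x, ⟪x, A x⟫ ≤ M * ‖x‖ ^ 2)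
    (x : E) : ‖A x‖ ≤ M * ‖x‖ := by
  rcases eq_or_ne x 0 with rfl | hx
  · simp
  have hM0 : 0 ≤ M := by
    have := (h0 x).trans (hM x)
    exact nonneg_of_mul_nonneg_left this (by positivity)
  let T : E →L[ℝ] E := ⟨A, hA.continuous⟩
  have hT : ‖T‖ ≤ M := by
    rw [T.norm_eq_iSup_rayleighQuotient hA]
    refine ciSup_le fun y => ?_
    rcases eq_or_ne y 0 with rfl | hy
    · simpa using hM0
    · have hy2 : 0 < ‖y‖ ^ 2 := by positivity
      have hR : T.rayleighQuotient y = ⟪y, A y⟫ / ‖y‖ ^ 2 := by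
        rw [ContinuousLinearMap.rayleighQuotient, ContinuousLinearMap.reApplyInnerSelf_apply,
          RCLike.re_to_real, real_inner_comm]
        rfl
      rw [hR, abs_of_nonneg (div_nonneg (h0 y) hy2.le)]
      exact (div_le_iff₀ hy2).2 (hM y)
  exact T.le_of_opNorm_le hT x

theorem mul_norm_sq_le_inner_sub_norm_sq [CompleteSpace E] {A : E →ₗ[ℝ] E} (hA : A.IsSymmetric)
    {μH MH ρ η L : ℝ} (hμH : 0 ≤ μH) (hlow : ∀ x, μH * ‖x‖ ^ 2 ≤ ⟪x, A x⟫)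
    (hup : ∀ x, ⟪x, A x⟫ ≤ MH * ‖x‖ ^ 2) {g w : E} (hw : ‖w - A g‖ ≤ ρ * μH * ‖g‖)
    (hη : 0 ≤ η) (hL : 0 ≤ L) :
    (η * μH * (1 - ρ) - L * η ^ 2 / 2 * (MH + ρ * μH) ^ 2) * ‖g‖ ^ 2
      ≤ η * ⟪g, w⟫ - L * η ^ 2 / 2 * ‖w‖ ^ 2 := by
  have hinner : (1 - ρ) * μH * ‖g‖ ^ 2 ≤ ⟪g, w⟫ := by
    have hdev := (abs_le.1 (abs_real_inner_le_norm g (w - A g))).1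
    have := mul_le_mul_of_nonneg_left hw (norm_nonneg g)
    rw [inner_sub_right] at hdev
    linarith [hlow g]
  have hnorm : ‖w‖ ≤ (MH + ρ * μH) * ‖g‖ := by
    have hpos : ∀ x, 0 ≤ ⟪x, A x⟫ := fun x => (mul_nonneg hμH (sq_nonneg _)).trans (hlow x)
    have hAg := hA.norm_apply_le_of_inner_le hpos hup g
    linarith [norm_le_norm_add_norm_sub' w (A g)]
  have hnorm_sq := pow_le_pow_left₀ (norm_nonneg w) hnorm 2
  nlinarith [mul_le_mul_of_nonneg_left hinner hη,
    mul_le_mul_of_nonneg_left hnorm_sq (by positivity : 0 ≤ L * η ^ 2 / 2)]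

section Smooth

variable [CompleteSpace E]

theorem continuous_gradient_of_lipschitz {f : E → ℝ} {L : ℝ}
    (hlip : ∀ x y, ‖gradient f x - gradient f y‖ ≤ L * ‖x - y‖) : Continuous (gradient f) := by
  refine (LipschitzWith.of_dist_le_mul (K := L.toNNReal) fun x y => ?_).continuous
  rw [dist_eq_norm, dist_eq_norm, Real.coe_toNNReal']
  exact (hlip x y).trans (by gcongr; exact le_max_left L 0)

theorem HasGradientAt.hasDerivAt_comp_add_smul {f : E → ℝ} {g x v : E} {s : ℝ}
    (hf : HasGradientAt f g (x + s • v)) :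
    HasDerivAt (fun t : ℝ => f (x + t • v)) ⟪g, v⟫ s := by
  have hpath : HasDerivAt (fun t : ℝ => x + t • v) v s := by
    simpa using ((hasDerivAt_id s).smul_const v).const_add x
  simpa [InnerProductSpace.toDual_apply_apply, Function.comp_def] using
    hf.hasFDerivAt.comp_hasDerivAt s hpath

theorem abs_sub_sub_inner_gradient_le {f : E → ℝ} {L : ℝ} (hf : Differentiable ℝ f)
    (hlip : ∀ x y, ‖gradient f x - gradient f y‖ ≤ L * ‖x - y‖) (x y : E) :
    |f y - f x - ⟪gradient f x, y - x⟫| ≤ L / 2 * ‖y - x‖ ^ 2 := by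
  set v := y - x
  let φ : ℝ → ℝ := fun s => f (x + s • v) - s * ⟪gradient f x, v⟫ - f x
  have hφ : ∀ s, HasDerivAt φ ⟪gradient f (x + s • v) - gradient f x, v⟫ s := fun s => by
    simpa [φ, inner_sub_left] using
      (((hf _).hasGradientAt.hasDerivAt_comp_add_smul).sub
        ((hasDerivAt_id s).mul_const _)).sub_const (f x)
  have hB : ∀ s, HasDerivAt (fun s : ℝ => L / 2 * s ^ 2 * ‖v‖ ^ 2) (L * s * ‖v‖ ^ 2) s :=
    fun s => (((hasDerivAt_pow 2 s).const_mul (L / 2)).mul_const (‖v‖ ^ 2)).congr_deriv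
      (by push_cast; ring)
  have bound : ∀ s ∈ Set.Ico (0 : ℝ) 1,
      ‖⟪gradient f (x + s • v) - gradient f x, v⟫‖ ≤ L * s * ‖v‖ ^ 2 := by
    rintro s ⟨hs, -⟩
    calc ‖⟪gradient f (x + s • v) - gradient f x, v⟫‖
        ≤ ‖gradient f (x + s • v) - gradient f x‖ * ‖v‖ := norm_inner_le_norm _ _
      _ ≤ L * ‖x + s • v - x‖ * ‖v‖ := by gcongr; exact hlip _ _
      _ = L * s * ‖v‖ ^ 2 := by
        rw [add_sub_cancel_left, norm_smul, Real.norm_of_nonneg hs]; ring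
  have := image_norm_le_of_norm_deriv_right_le_deriv_boundary
    (fun s _ => (hφ s).continuousAt.continuousWithinAt) (fun s _ => (hφ s).hasDerivWithinAt)
    (by simp [φ]) hB bound (Set.right_mem_Icc.2 zero_le_one)
  simp only [φ, one_smul, one_mul, one_pow, mul_one, v, add_sub_cancel, Real.norm_eq_abs] at this
  rwa [sub_right_comm]

end Smooth

section CondExp

variable [CompleteSpace E] {Ω : Type*} {m m0 : MeasurableSpace Ω} {μ : Measure Ω}

theorem integral_inner_condExp [IsFiniteMeasure μ] (hm : m ≤ m0) {g u : Ω → E}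
    (hg : StronglyMeasurable[m] g)
    (hgu : Integrable (fun ω => ⟪g ω, u ω⟫) μ) (hu : Integrable u μ) :
    ∫ ω, ⟪g ω, u ω⟫ ∂μ = ∫ ω, ⟪g ω, (μ[u | m]) ω⟫ ∂μ := by
  rw [← integral_condExp hm]
  exact integral_congr_ae (condExp_bilin_of_stronglyMeasurable_left (innerSL ℝ) hg hgu hu)

theorem integral_norm_sq_eq_condExp_add [IsFiniteMeasure μ] (hm : m ≤ m0) {u : Ω → E}
    (hu : MemLp u 2 μ) :
    ∫ ω, ‖u ω‖ ^ 2 ∂μ = ∫ ω, ‖(μ[u | m]) ω‖ ^ 2 ∂μ + ∫ ω, ‖u ω - (μ[u | m]) ω‖ ^ 2 ∂μ := by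
  set v := μ[u | m]
  have hv : MemLp v 2 μ := hu.condExp one_le_two
  have hvu : ∫ ω, ⟪v ω, u ω⟫ ∂μ = ∫ ω, ‖v ω‖ ^ 2 ∂μ := by
    rw [integral_inner_condExp hm stronglyMeasurable_condExp (hv.integrable_inner hu)
      (hu.integrable one_le_two)]
    exact integral_congr_ae (ae_of_all _ fun ω => real_inner_self_eq_norm_sq (v ω))
  have hsplit : ∀ ω, ‖u ω - v ω‖ ^ 2 = ‖u ω‖ ^ 2 - 2 * ⟪v ω, u ω⟫ + ‖v ω‖ ^ 2 := fun ω => by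
    rw [norm_sub_sq_real, real_inner_comm]
  have hcross : Integrable (fun ω => 2 * ⟪v ω, u ω⟫) μ := (hv.integrable_inner hu).const_mul 2
  have hdiff : Integrable (fun ω => ‖u ω‖ ^ 2 - 2 * ⟪v ω, u ω⟫) μ :=
    hu.integrable_norm_sq.sub hcross
  simp_rw [hsplit]
  rw [integral_add hdiff hv.integrable_norm_sq, integral_sub hu.integrable_norm_sq hcross,
    integral_const_mul, hvu]
  ring

theorem integral_le_of_ae_condExp_le [IsProbabilityMeasure μ] (hm : m ≤ m0) {h : Ω → ℝ}
    {C : ℝ} (hC : ∀ᵐ ω ∂μ, (μ[h | m]) ω ≤ C) : ∫ ω, h ω ∂μ ≤ C := by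
  rw [← integral_condExp hm]
  simpa using integral_mono_ae integrable_condExp (integrable_const C) hC

end CondExp

section Integrability

variable [CompleteSpace E] {f : E → ℝ} {L : ℝ}
  {Ω : Type*} {m0 : MeasurableSpace Ω} {μ : Measure Ω} [IsFiniteMeasure μ] {X : Ω → E}

theorem MeasureTheory.MemLp.gradient_comp
    (hlip : ∀ x y, ‖gradient f x - gradient f y‖ ≤ L * ‖x - y‖) (hX : MemLp X 2 μ) :
    MemLp (fun ω => gradient f (X ω)) 2 μ := by
  refine MemLp.of_le ((memLp_const ‖gradient f 0‖).add (hX.norm.const_mul L))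
    ((continuous_gradient_of_lipschitz hlip).comp_aestronglyMeasurable hX.1)
    (ae_of_all _ fun ω => ?_)
  calc ‖gradient f (X ω)‖ ≤ ‖gradient f 0‖ + ‖gradient f (X ω) - gradient f 0‖ :=
        norm_le_norm_add_norm_sub' _ _
    _ ≤ ‖gradient f 0‖ + L * ‖X ω‖ := by simpa using hlip (X ω) 0
    _ ≤ ‖‖gradient f 0‖ + L * ‖X ω‖‖ := Real.le_norm_self _

theorem MeasureTheory.MemLp.integrable_comp_of_lipschitz_gradient (hf : Differentiable ℝ f)
    (hlip : ∀ x y, ‖gradient f x - gradient f y‖ ≤ L * ‖x - y‖) (hX : MemLp X 2 μ) :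
    Integrable (fun ω => f (X ω)) μ := by
  have hdom : Integrable
      (fun ω => |f 0| + ‖gradient f 0‖ * ‖X ω‖ + L / 2 * ‖X ω‖ ^ 2) μ :=
    ((integrable_const _).add ((hX.norm.integrable one_le_two).const_mul _)).add
      (hX.integrable_norm_sq.const_mul _)
  refine hdom.mono' (hf.continuous.comp_aestronglyMeasurable hX.1) (ae_of_all _ fun ω => ?_)
  have htaylor := abs_sub_sub_inner_gradient_le hf hlip 0 (X ω)
  have hinner := abs_real_inner_le_norm (gradient f 0) (X ω)
  rw [sub_zero] at htaylor
  rw [Real.norm_eq_abs]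
  calc |f (X ω)| = |(f (X ω) - f 0 - ⟪gradient f 0, X ω⟫) + f 0 + ⟪gradient f 0, X ω⟫| := by
        ring_nf
    _ ≤ |f (X ω) - f 0 - ⟪gradient f 0, X ω⟫| + |f 0| + |⟪gradient f 0, X ω⟫| :=
        abs_add_three _ _ _
    _ ≤ |f 0| + ‖gradient f 0‖ * ‖X ω‖ + L / 2 * ‖X ω‖ ^ 2 := by linarith

end Integrability

section StochasticStep

variable [CompleteSpace E] {f : E → ℝ} {L : ℝ} {Ω : Type*} {m m0 : MeasurableSpace Ω}
  {μ : Measure Ω} {θ u : Ω → E} {η : ℝ}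

theorem integral_comp_sub_smul_le [IsFiniteMeasure μ] (hm : m ≤ m0) (hf : Differentiable ℝ f)
    (hlip : ∀ x y, ‖gradient f x - gradient f y‖ ≤ L * ‖x - y‖)
    (hθm : StronglyMeasurable[m] θ) (hθ : MemLp θ 2 μ) (hu : MemLp u 2 μ) :
    ∫ ω, f (θ ω - η • u ω) ∂μ
      ≤ ∫ ω, f (θ ω) ∂μ - η * ∫ ω, ⟪gradient f (θ ω), (μ[u | m]) ω⟫ ∂μ
        + L * η ^ 2 / 2 * (∫ ω, ‖(μ[u | m]) ω‖ ^ 2 ∂μ + ∫ ω, ‖u ω - (μ[u | m]) ω‖ ^ 2 ∂μ) := by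
  have hdescent : ∀ ω, f (θ ω - η • u ω)
      ≤ f (θ ω) - η * ⟪gradient f (θ ω), u ω⟫ + L * η ^ 2 / 2 * ‖u ω‖ ^ 2 := fun ω => by
    have := (abs_le.1 (abs_sub_sub_inner_gradient_le hf hlip (θ ω) (θ ω - η • u ω))).2
    rw [sub_sub_cancel_left, inner_neg_right, real_inner_smul_right, norm_neg, norm_smul,
      Real.norm_eq_abs, mul_pow, sq_abs] at this
    linarith
  have hgrad := hθ.gradient_comp hlip
  have hinner : Integrable (fun ω => η * ⟪gradient f (θ ω), u ω⟫) μ :=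
    (hgrad.integrable_inner hu).const_mul η
  have hsq : Integrable (fun ω => L * η ^ 2 / 2 * ‖u ω‖ ^ 2) μ :=
    hu.integrable_norm_sq.const_mul _
  have hfθ := hθ.integrable_comp_of_lipschitz_gradient hf hlip
  have hdiff : Integrable (fun ω => f (θ ω) - η * ⟪gradient f (θ ω), u ω⟫) μ := hfθ.sub hinner
  have hrhs : Integrable (fun ω => f (θ ω) - η * ⟪gradient f (θ ω), u ω⟫
      + L * η ^ 2 / 2 * ‖u ω‖ ^ 2) μ := hdiff.add hsq
  refine (integral_mono
    ((hθ.sub (hu.const_smul η)).integrable_comp_of_lipschitz_gradient hf hlip)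
    hrhs hdescent).trans_eq ?_
  rw [integral_add hdiff hsq, integral_sub hfθ hinner, integral_const_mul,
    integral_const_mul, integral_inner_condExp hm
      ((continuous_gradient_of_lipschitz hlip).comp_stronglyMeasurable hθm)
      (hgrad.integrable_inner hu) (hu.integrable one_le_two),
    integral_norm_sq_eq_condExp_add hm hu]

theorem integral_comp_sub_smul_sub_le [IsProbabilityMeasure μ] (hm : m ≤ m0)
    (hf : Differentiable ℝ f) (hlip : ∀ x y, ‖gradient f x - gradient f y‖ ≤ L * ‖x - y‖)
    (hL : 0 ≤ L) (hθm : StronglyMeasurable[m] θ) (hθ : MemLp θ 2 μ) (hu : MemLp u 2 μ)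
    {c σ μPL fstar : ℝ} (hc : 0 ≤ c)
    (hdrift : ∀ᵐ ω ∂μ, c * ‖gradient f (θ ω)‖ ^ 2
      ≤ η * ⟪gradient f (θ ω), (μ[u | m]) ω⟫ - L * η ^ 2 / 2 * ‖(μ[u | m]) ω‖ ^ 2)
    (hvar : ∫ ω, ‖u ω - (μ[u | m]) ω‖ ^ 2 ∂μ ≤ σ ^ 2)
    (hPL : ∀ x, μPL * (f x - fstar) ≤ 1 / 2 * ‖gradient f x‖ ^ 2) :
    ∫ ω, (f (θ ω - η • u ω) - fstar) ∂μ
      ≤ (1 - 2 * μPL * c) * ∫ ω, (f (θ ω) - fstar) ∂μ + L * η ^ 2 * σ ^ 2 / 2 := by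
  have hgrad := hθ.gradient_comp hlip
  have hcond : MemLp (μ[u | m]) 2 μ := hu.condExp one_le_two
  have hfθ := hθ.integrable_comp_of_lipschitz_gradient hf hlip
  have hdrift_int : c * ∫ ω, ‖gradient f (θ ω)‖ ^ 2 ∂μ
      ≤ η * ∫ ω, ⟪gradient f (θ ω), (μ[u | m]) ω⟫ ∂μ
        - L * η ^ 2 / 2 * ∫ ω, ‖(μ[u | m]) ω‖ ^ 2 ∂μ := by
    rw [← integral_const_mul, ← integral_const_mul, ← integral_const_mul,
      ← integral_sub ((hgrad.integrable_inner hcond).const_mul _)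
        (hcond.integrable_norm_sq.const_mul _)]
    exact integral_mono_ae (hgrad.integrable_norm_sq.const_mul _)
      (((hgrad.integrable_inner hcond).const_mul _).sub
        (hcond.integrable_norm_sq.const_mul _)) hdrift
  have hshift : ∀ {g : Ω → ℝ}, Integrable g μ → ∫ ω, (g ω - fstar) ∂μ = ∫ ω, g ω ∂μ - fstar :=
    fun hg => by simp [integral_sub hg (integrable_const fstar)]
  have hPL_int : 2 * μPL * ∫ ω, (f (θ ω) - fstar) ∂μ ≤ ∫ ω, ‖gradient f (θ ω)‖ ^ 2 ∂μ := by
    rw [← integral_const_mul]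
    exact integral_mono ((hfθ.sub (integrable_const _)).const_mul _)
      hgrad.integrable_norm_sq fun ω => by linarith [hPL (θ ω)]
  have hdescent := integral_comp_sub_smul_le (η := η) hm hf hlip hθm hθ hu
  rw [hshift hfθ] at hPL_int ⊢
  rw [hshift (g := fun ω => f (θ ω - η • u ω))
    ((hθ.sub (hu.const_smul η)).integrable_comp_of_lipschitz_gradient hf hlip)]
  linarith [mul_le_mul_of_nonneg_left hPL_int hc,
    mul_le_mul_of_nonneg_left hvar (by positivity : 0 ≤ L * η ^ 2 / 2)]

end StochasticStep

end

theorem le_pow_mul_add_div_of_le_mul_add {a : ℕ → ℝ} {q b : ℝ} (hq0 : 0 ≤ q) (hq1 : q < 1)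
    (hb : 0 ≤ b) (h : ∀ t, a (t + 1) ≤ q * a t + b) (T : ℕ) :
    a T ≤ q ^ T * a 0 + b / (1 - q) := by
  induction T with
  | zero => simpa using div_nonneg hb (sub_nonneg.2 hq1.le)
  | succ T ih =>
    have hfixed : q * (b / (1 - q)) + b = b / (1 - q) := by
      field_simp [(sub_pos.2 hq1).ne']
      ring
    calc a (T + 1) ≤ q * a T + b := h T
      _ ≤ q * (q ^ T * a 0 + b / (1 - q)) + b := by gcongr
      _ = q ^ (T + 1) * a 0 + b / (1 - q) := by rw [pow_succ]; linear_combination hfixed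

theorem pl_linear_convergence_to_neighborhood_general
    {Ω : Type*} {m0 : MeasurableSpace Ω} (μ : Measure Ω) [IsProbabilityMeasure μ]
    (F : Filtration ℕ m0)
    {d : ℕ} (f : EuclideanSpace ℝ (Fin d) → ℝ)
    (L : ℝ) (hL : 0 < L)
    (hdiff : Differentiable ℝ f)
    (hlip : ∀ x y, ‖gradient f x - gradient f y‖ ≤ L * ‖x - y‖)
    (fstar : ℝ)
    (muH MH ρ σ η : ℝ)
    (hmuH : 0 < muH)
    (hη0 : 0 < η)
    (θ0 : EuclideanSpace ℝ (Fin d))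
    (θ u : ℕ → Ω → EuclideanSpace ℝ (Fin d))
    (hθ0 : θ 0 = fun _ => θ0)
    (hθmeas : ∀ t, StronglyMeasurable[F t] (θ t))
    (huL2 : ∀ t, MemLp (u t) 2 μ)
    (hrec : ∀ t ω, θ (t + 1) ω = θ t ω - η • u t ω)
    (hbias : ∀ t, ∃ H : Ω → Matrix (Fin d) (Fin d) ℝ,
      (∀ i j, Measurable[F t] fun ω => H ω i j) ∧
      ∀ᵐ ω ∂μ,
        (H ω).IsSymm ∧
        (∀ x : EuclideanSpace ℝ (Fin d),
          muH * ‖x‖ ^ 2 ≤ ⟪x, Matrix.toEuclideanLin (H ω) x⟫ ∧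
          ⟪x, Matrix.toEuclideanLin (H ω) x⟫ ≤ MH * ‖x‖ ^ 2) ∧
        ‖(μ[u t | F t]) ω - Matrix.toEuclideanLin (H ω) (gradient f (θ t ω))‖
          ≤ ρ * muH * ‖gradient f (θ t ω)‖)
    (hvar : ∀ t, ∀ᵐ ω ∂μ,
      (μ[(fun ω' => ‖u t ω' - (μ[u t | F t]) ω'‖ ^ 2) | F t]) ω ≤ σ ^ 2)
    (muPL : ℝ) (hmuPL : 0 < muPL)
    (hPL : ∀ x, muPL * (f x - fstar) ≤ (1 / 2) * ‖gradient f x‖ ^ 2)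
    (c : ℝ)
    (hc : c = η * muH * (1 - ρ) - (L * η ^ 2 / 2) * (MH + ρ * muH) ^ 2)
    (hc0 : 0 < 2 * muPL * c) (hc1 : 2 * muPL * c < 1) :
    ∀ T : ℕ,
      ∫ ω, (f (θ T ω) - fstar) ∂μ
        ≤ (1 - 2 * muPL * c) ^ T * (f θ0 - fstar)
          + L * η ^ 2 * σ ^ 2 / (4 * muPL * c) := by
  have hc_pos : 0 < c := pos_of_mul_pos_right hc0 (by positivity)
  have hθL2 : ∀ t, MemLp (θ t) 2 μ := by
    intro t
    induction t with
    | zero => simpa [hθ0] using memLp_const θ0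
    | succ t ih =>
      rw [show θ (t + 1) = θ t - η • u t from funext (hrec t)]
      exact ih.sub ((huL2 t).const_smul η)
  have hstep : ∀ t, ∫ ω, (f (θ (t + 1) ω) - fstar) ∂μ
      ≤ (1 - 2 * muPL * c) * ∫ ω, (f (θ t ω) - fstar) ∂μ + L * η ^ 2 * σ ^ 2 / 2 := by
    intro t
    obtain ⟨H, -, hH⟩ := hbias t
    simp_rw [hrec t]
    refine integral_comp_sub_smul_sub_le (F.le t) hdiff hlip hL.le (hθmeas t) (hθL2 t) (huL2 t)
      hc_pos.le ?_ (integral_le_of_ae_condExp_le (F.le t) (hvar t)) hPL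
    filter_upwards [hH] with ω ⟨hsymm, hbounds, hdev⟩
    rw [hc]
    exact mul_norm_sq_le_inner_sub_norm_sq (Matrix.isSymmetric_toEuclideanLin_iff.2 hsymm)
      hmuH.le (fun x => (hbounds x).1) (fun x => (hbounds x).2) hdev hη0.le hL.le
  intro T
  have h := le_pow_mul_add_div_of_le_mul_add
    (a := fun t => ∫ ω, (f (θ t ω) - fstar) ∂μ) (by linarith) (by linarith) (by positivity) hstep T
  have hradius : L * η ^ 2 * σ ^ 2 / 2 / (1 - (1 - 2 * muPL * c))
      = L * η ^ 2 * σ ^ 2 / (4 * muPL * c) := by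
    rw [sub_sub_cancel, div_div]
    ring
  rw [hradius] at h
  simpa [hθ0] using h

/-- **Linear convergence to a neighborhood under the Polyak–Łojasiewicz condition.**
In the setting of the nonconvex stationarity bound, if moreover `f` satisfies the PL
condition `(1/2)‖∇f(θ)‖² ≥ μ_PL (f(θ) − fstar)` and, with
`c = η μ_H (1−ρ) − (Lη²/2)(M_H+ρμ_H)²`, we have `0 < 2μ_PL c < 1`, then
`E[f(θ_T) − fstar] ≤ (1 − 2μ_PL c)^T (f(θ_0) − fstar) + Lη²σ²/(4μ_PL c)`. -/
theorem pl_linear_convergence_to_neighborhood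
    {Ω : Type*} {m0 : MeasurableSpace Ω} (μ : Measure Ω) [IsProbabilityMeasure μ]
    (F : Filtration ℕ m0)
    {d : ℕ} (f : EuclideanSpace ℝ (Fin d) → ℝ)
    (L : ℝ) (hL : 0 < L)
    (hdiff : Differentiable ℝ f)
    (hlip : ∀ x y, ‖gradient f x - gradient f y‖ ≤ L * ‖x - y‖)
    (fstar : ℝ) (hbdd : ∀ x, fstar ≤ f x)
    (muH MH ρ σ η : ℝ)
    (hmuH : 0 < muH) (hMH : muH ≤ MH)
    (hρ0 : 0 ≤ ρ) (hρ1 : ρ < 1) (hσ : 0 ≤ σ)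
    (hη0 : 0 < η) (hη : η ≤ muH * (1 - ρ) / (L * (MH + ρ * muH) ^ 2))
    (θ0 : EuclideanSpace ℝ (Fin d))
    (θ u : ℕ → Ω → EuclideanSpace ℝ (Fin d))
    (hθ0 : θ 0 = fun _ => θ0)
    (hθmeas : ∀ t, StronglyMeasurable[F t] (θ t))
    (humeas : ∀ t, StronglyMeasurable[F (t + 1)] (u t))
    (huL2 : ∀ t, MemLp (u t) 2 μ)
    (hrec : ∀ t ω, θ (t + 1) ω = θ t ω - η • u t ω)
    (hbias : ∀ t, ∃ H : Ω → Matrix (Fin d) (Fin d) ℝ,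
      (∀ i j, Measurable[F t] fun ω => H ω i j) ∧
      ∀ᵐ ω ∂μ,
        (H ω).IsSymm ∧
        (∀ x : EuclideanSpace ℝ (Fin d),
          muH * ‖x‖ ^ 2 ≤ ⟪x, Matrix.toEuclideanLin (H ω) x⟫ ∧
          ⟪x, Matrix.toEuclideanLin (H ω) x⟫ ≤ MH * ‖x‖ ^ 2) ∧
        ‖(μ[u t | F t]) ω - Matrix.toEuclideanLin (H ω) (gradient f (θ t ω))‖
          ≤ ρ * muH * ‖gradient f (θ t ω)‖)
    (hvar : ∀ t, ∀ᵐ ω ∂μ,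
      (μ[(fun ω' => ‖u t ω' - (μ[u t | F t]) ω'‖ ^ 2) | F t]) ω ≤ σ ^ 2)
    (muPL : ℝ) (hmuPL : 0 < muPL)
    (hPL : ∀ x, muPL * (f x - fstar) ≤ (1 / 2) * ‖gradient f x‖ ^ 2)
    (c : ℝ)
    (hc : c = η * muH * (1 - ρ) - (L * η ^ 2 / 2) * (MH + ρ * muH) ^ 2)
    (hc0 : 0 < 2 * muPL * c) (hc1 : 2 * muPL * c < 1) :
    ∀ T : ℕ,
      ∫ ω, (f (θ T ω) - fstar) ∂μ
        ≤ (1 - 2 * muPL * c) ^ T * (f θ0 - fstar)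
          + L * η ^ 2 * σ ^ 2 / (4 * muPL * c) :=
  pl_linear_convergence_to_neighborhood_general μ F f L hL hdiff hlip fstar muH MH ρ σ η hmuH hη0 θ0
    θ u hθ0 hθmeas huL2 hrec hbias hvar muPL hmuPL hPL c hc hc0 hc1
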